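/- Let q ∈ (0,1) and x > 0. Then √([x]_q) ≤ Γ_q(x+1) / Γ_q(x + 1/2) ≤ √([x + 1/2]_q). -/

import Mathlib

/-- The q-deformed Gamma function:
    `Γ_q(x) = (1-q)^(1-x) * ∏_{n=0}^∞ (1-q^(n+1))/(1-q^(n+x))`. -/
noncomputable def qGamma (q x : ℝ) : ℝ :=
  (1 - q) ^ (1 - x) * ∏' n : ℕ, (1 - q ^ ((n : ℝ) + 1)) / (1 - q ^ ((n : ℝ) + x))

/-- The q-bracket: `[x]_q = (1-q^x)/(1-q)`. -/
noncomputable def qBracket (q x : ℝ) : ℝ := (1 - q ^ x) / (1 - q)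

/-!
`Γ_q` satisfies `Γ_q(x + 1) = [x]_q Γ_q(x)` and is log-convex: factor by factor,
`(1 - q^a)(1 - q^(a+1)) ≤ (1 - q^(a+1/2))²` because the difference is `q^a (1 - q^(1/2))²`.
Midpoint log-convexity at `x` gives `Γ_q(x+1/2)² ≤ Γ_q(x) Γ_q(x+1) = Γ_q(x+1)² / [x]_q`, and at
`x + 1/2` gives `Γ_q(x+1)² ≤ Γ_q(x+1/2) Γ_q(x+3/2) = [x+1/2]_q Γ_q(x+1/2)²`.
-/

open Real

/-- `log (q^c; q)_∞`, the logarithm of the infinite q-Pochhammer symbol. -/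
noncomputable def logQPochhammer (q c : ℝ) : ℝ :=
  ∑' n : ℕ, log (1 - q ^ ((n : ℝ) + c))

lemma one_sub_rpow_pos {q c : ℝ} (hq : q ∈ Set.Ioo (0 : ℝ) 1) (hc : 0 < c) : 0 < 1 - q ^ c :=
  sub_pos.2 (rpow_lt_one hq.1.le hq.2 hc)

lemma qBracket_pos {q x : ℝ} (hq : q ∈ Set.Ioo (0 : ℝ) 1) (hx : 0 < x) : 0 < qBracket q x :=
  div_pos (one_sub_rpow_pos hq hx) (sub_pos.2 hq.2)

lemma one_sub_rpow_mul_one_sub_rpow_add_one_le {q : ℝ} (hq : 0 < q) (a : ℝ) :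
    (1 - q ^ a) * (1 - q ^ (a + 1)) ≤ (1 - q ^ (a + 1 / 2)) ^ 2 := by
  have hsq : (q ^ (1 / 2 : ℝ)) ^ 2 = q := by
    rw [← rpow_natCast, ← rpow_mul hq.le]; norm_num
  have hqa : 0 < q ^ a := rpow_pos_of_pos hq a
  rw [rpow_add hq, rpow_add hq, rpow_one]
  nlinarith [mul_nonneg hqa.le (sq_nonneg (1 - q ^ (1 / 2 : ℝ)))]

lemma summable_log_one_sub_rpow {q : ℝ} (hq : q ∈ Set.Ioo (0 : ℝ) 1) (c : ℝ) :
    Summable fun n : ℕ => log (1 - q ^ ((n : ℝ) + c)) := by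
  have hgeom : Summable fun n : ℕ => -q ^ ((n : ℝ) + c) := by
    simp_rw [rpow_add hq.1, rpow_natCast]
    exact ((summable_geometric_of_lt_one hq.1.le hq.2).mul_right _).neg
  simpa [sub_eq_add_neg] using summable_log_one_add_of_summable hgeom

lemma logQPochhammer_eq_log_add {q : ℝ} (hq : q ∈ Set.Ioo (0 : ℝ) 1) (c : ℝ) :
    logQPochhammer q c = log (1 - q ^ c) + logQPochhammer q (c + 1) := by
  rw [logQPochhammer, (summable_log_one_sub_rpow hq c).tsum_eq_zero_add, logQPochhammer]
  congr 1
  · simp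
  · refine tsum_congr fun n => ?_
    push_cast
    ring_nf

lemma logQPochhammer_add_le {q c : ℝ} (hq : q ∈ Set.Ioo (0 : ℝ) 1) (hc : 0 < c) :
    logQPochhammer q c + logQPochhammer q (c + 1) ≤ 2 * logQPochhammer q (c + 1 / 2) := by
  have hs := summable_log_one_sub_rpow hq
  rw [logQPochhammer, logQPochhammer, logQPochhammer, ← (hs c).tsum_add (hs (c + 1)),
    ← tsum_mul_left]
  refine ((hs c).add (hs (c + 1))).tsum_le_tsum (fun n => ?_) ((hs (c + 1 / 2)).mul_left 2)
  have ha : 0 < (n : ℝ) + c := by positivity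
  have hfactor := one_sub_rpow_mul_one_sub_rpow_add_one_le hq.1 ((n : ℝ) + c)
  rw [add_assoc, add_assoc] at hfactor
  rw [← log_mul (one_sub_rpow_pos hq ha).ne' (one_sub_rpow_pos hq (by positivity)).ne',
    ← Nat.cast_ofNat, ← log_pow]
  exact log_le_log (mul_pos (one_sub_rpow_pos hq ha) (one_sub_rpow_pos hq (by positivity)))
    hfactor

lemma qGamma_eq_rpow_mul_exp {q y : ℝ} (hq : q ∈ Set.Ioo (0 : ℝ) 1) (hy : 0 < y) :
    qGamma q y = (1 - q) ^ (1 - y) * exp (logQPochhammer q 1 - logQPochhammer q y) := by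
  have hpos (c : ℝ) (hc : 0 < c) (n : ℕ) : 0 < 1 - q ^ ((n : ℝ) + c) :=
    one_sub_rpow_pos hq (by positivity)
  have hlog (n : ℕ) : log (1 - q ^ ((n : ℝ) + 1)) - log (1 - q ^ ((n : ℝ) + y)) =
      log ((1 - q ^ ((n : ℝ) + 1)) / (1 - q ^ ((n : ℝ) + y))) :=
    (log_div (hpos 1 one_pos n).ne' (hpos y hy n).ne').symm
  have hs := summable_log_one_sub_rpow hq
  rw [qGamma, logQPochhammer, logQPochhammer, ← (hs 1).tsum_sub (hs y), tsum_congr hlog,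
    rexp_tsum_eq_tprod (fun n => div_pos (hpos 1 one_pos n) (hpos y hy n))
      (((hs 1).sub (hs y)).congr hlog)]

lemma qGamma_pos {q y : ℝ} (hq : q ∈ Set.Ioo (0 : ℝ) 1) (hy : 0 < y) : 0 < qGamma q y := by
  have h1q : 0 < 1 - q := sub_pos.2 hq.2
  rw [qGamma_eq_rpow_mul_exp hq hy]
  positivity

theorem qGamma_add_one {q y : ℝ} (hq : q ∈ Set.Ioo (0 : ℝ) 1) (hy : 0 < y) :
    qGamma q (y + 1) = qBracket q y * qGamma q y := by
  have h1q : 0 < 1 - q := sub_pos.2 hq.2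
  have hqy := one_sub_rpow_pos hq hy
  have hpow : (1 - q) ^ (1 - (y + 1)) = (1 - q) ^ (1 - y) / (1 - q) := by
    rw [show 1 - (y + 1) = 1 - y - 1 by ring, rpow_sub h1q, rpow_one]
  have hexp : exp (logQPochhammer q 1 - (log (1 - q ^ y) + logQPochhammer q (y + 1))) =
      exp (logQPochhammer q 1 - logQPochhammer q (y + 1)) / (1 - q ^ y) := by
    rw [← sub_sub, sub_right_comm, exp_sub _ (log _), exp_log hqy]
  rw [qGamma_eq_rpow_mul_exp hq hy, qGamma_eq_rpow_mul_exp hq (by positivity),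
    logQPochhammer_eq_log_add hq y, hexp, hpow, qBracket]
  field_simp

theorem qGamma_add_half_sq_le {q y : ℝ} (hq : q ∈ Set.Ioo (0 : ℝ) 1) (hy : 0 < y) :
    qGamma q (y + 1 / 2) ^ 2 ≤ qGamma q y * qGamma q (y + 1) := by
  have h1q : 0 < 1 - q := sub_pos.2 hq.2
  set L := logQPochhammer q
  have hpow : ((1 - q) ^ (1 - (y + 1 / 2))) ^ 2 = (1 - q) ^ (1 - y) * (1 - q) ^ (1 - (y + 1)) := by
    rw [← rpow_natCast, ← rpow_mul h1q.le, ← rpow_add h1q]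
    ring_nf
  rw [qGamma_eq_rpow_mul_exp hq hy, qGamma_eq_rpow_mul_exp hq (by positivity),
    qGamma_eq_rpow_mul_exp hq (by positivity)]
  calc _ = (1 - q) ^ (1 - y) * (1 - q) ^ (1 - (y + 1)) *
        exp ((L 1 - L (y + 1 / 2)) + (L 1 - L (y + 1 / 2))) := by
        rw [mul_pow, hpow, sq (exp _), ← exp_add]
    _ ≤ (1 - q) ^ (1 - y) * (1 - q) ^ (1 - (y + 1)) *
        exp ((L 1 - L y) + (L 1 - L (y + 1))) := by
        refine mul_le_mul_of_nonneg_left (exp_le_exp.2 ?_) (by positivity)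
        linarith [logQPochhammer_add_le hq hy]
    _ = _ := by
        rw [exp_add]
        ring

theorem qSandor_inequality (q x : ℝ) (hq : q ∈ Set.Ioo (0 : ℝ) 1) (hx : 0 < x) :
    Real.sqrt (qBracket q x) ≤ qGamma q (x + 1) / qGamma q (x + 1 / 2) ∧
    qGamma q (x + 1) / qGamma q (x + 1 / 2) ≤ Real.sqrt (qBracket q (x + 1 / 2)) := by
  have hΓ : 0 < qGamma q (x + 1 / 2) := qGamma_pos hq (by positivity)
  have hratio : 0 ≤ qGamma q (x + 1) / qGamma q (x + 1 / 2) :=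
    (div_pos (qGamma_pos hq (by positivity)) hΓ).le
  have lower : qBracket q x * qGamma q (x + 1 / 2) ^ 2 ≤ qGamma q (x + 1) ^ 2 :=
    calc _ ≤ qBracket q x * (qGamma q x * qGamma q (x + 1)) := by
          gcongr
          · exact (qBracket_pos hq hx).le
          · exact qGamma_add_half_sq_le hq hx
      _ = _ := by rw [qGamma_add_one hq hx]; ring
  have upper : qGamma q (x + 1) ^ 2 ≤ qBracket q (x + 1 / 2) * qGamma q (x + 1 / 2) ^ 2 :=
    calc _ ≤ qGamma q (x + 1 / 2) * qGamma q (x + 1 / 2 + 1) := by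
          have h := qGamma_add_half_sq_le hq (y := x + 1 / 2) (by positivity)
          rwa [show x + 1 / 2 + 1 / 2 = x + 1 by ring] at h
      _ = _ := by rw [qGamma_add_one hq (by positivity)]; ring
  constructor
  · rw [← sqrt_sq hratio]
    exact sqrt_le_sqrt (by rwa [div_pow, le_div_iff₀ (by positivity)])
  · exact le_sqrt_of_sq_le (by rwa [div_pow, div_le_iff₀ (by positivity)])
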